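/- There exists an integer K such that for all integers k ≥ K and all integers n ≥ k³, there exists an almost disjoint family of k-term arithmetic progressions contained in {1,...,n} of size at least n²/(4k³). -/
import Mathlib


/-- The `k`-term arithmetic progression `{a, a+d, ..., a+(k-1)d}` as a finite set. -/
def AP (a d k : ℕ) : Finset ℕ := (Finset.range k).image (fun i => a + i * d)

/-- `P` is a `k`-term arithmetic progression contained in `{1, ..., n}`. -/
def IsKAP (n k : ℕ) (P : Finset ℕ) : Prop :=
  ∃ a d : ℕ, 1 ≤ a ∧ 1 ≤ d ∧ a + (k - 1) * d ≤ n ∧ P = AP a d k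

lemma mem_AP {a d k x : ℕ} : x ∈ AP a d k ↔ ∃ i, i < k ∧ a + i * d = x := by
  simp [AP]

/-- If two elements of the difference window satisfy `e*d = e'*d'` with small
multipliers, they can't be strictly ordered. -/
lemma diff_ne {k m t e e' d d' : ℕ} (hkt : k * t ≤ m)
    (he1 : 1 ≤ e) (he2 : e ≤ k - 1) (he1' : 1 ≤ e') (he2' : e' ≤ k - 1)
    (hd1 : m < d + t) (hd2 : d ≤ m) (hd1' : m < d' + t) (hd2' : d' ≤ m)
    (heq : e * d = e' * d') (hdd : d < d') : False := by
  have hk2 : 2 ≤ k := by omega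
  have ht1 : 1 ≤ t := by omega
  have hee : e' < e := by
    by_contra h
    push_neg at h
    have h1 : e * d ≤ e' * d := Nat.mul_le_mul_right d h
    have h2 : e' * d < e' * d' := by nlinarith
    omega
  have heqz : (e : ℤ) * d = (e' : ℤ) * d' := by exact_mod_cast heq
  have h2 : (e' : ℤ) * ((d' : ℤ) - d) = ((e : ℤ) - e') * d := by linear_combination -heqz
  have key : (d : ℤ) ≤ (e' : ℤ) * ((d' : ℤ) - d) := by
    rw [h2]
    have h3 : (1 : ℤ) ≤ (e : ℤ) - e' := by omega
    nlinarith [show (0:ℤ) ≤ (d:ℤ) by positivity]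
  have hub : (e' : ℤ) * ((d' : ℤ) - d) ≤ ((k : ℤ) - 1) * ((t : ℤ) - 1) := by
    have h4 : (e' : ℤ) ≤ (k : ℤ) - 1 := by omega
    have h5 : (d' : ℤ) - d ≤ (t : ℤ) - 1 := by omega
    have h6 : (0 : ℤ) ≤ (d' : ℤ) - d := by omega
    have h7 : (0 : ℤ) ≤ (k : ℤ) - 1 := by omega
    exact mul_le_mul h4 h5 h6 h7
  have hexp : ((k : ℤ) - 1) * ((t : ℤ) - 1) = (k : ℤ) * t - k - t + 1 := by ring
  have hktz : (k : ℤ) * t ≤ (m : ℤ) := by exact_mod_cast hkt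
  have hd1z : (m : ℤ) < (d : ℤ) + t := by exact_mod_cast hd1
  have hk2z : (2 : ℤ) ≤ (k : ℤ) := by exact_mod_cast hk2
  linarith

lemma diff_eq {k m t e e' d d' : ℕ} (hkt : k * t ≤ m)
    (he1 : 1 ≤ e) (he2 : e ≤ k - 1) (he1' : 1 ≤ e') (he2' : e' ≤ k - 1)
    (hd1 : m < d + t) (hd2 : d ≤ m) (hd1' : m < d' + t) (hd2' : d' ≤ m)
    (heq : e * d = e' * d') : d = d' := by
  rcases lt_trichotomy d d' with h | h | h
  · exact (diff_ne hkt he1 he2 he1' he2' hd1 hd2 hd1' hd2' heq h).elim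
  · exact h
  · exact (diff_ne hkt he1' he2' he1 he2 hd1' hd2' hd1 hd2 heq.symm h).elim

/-- Two APs from our family sharing two points are identical (same parameters). -/
lemma key_lemma {k m t d a d' a' : ℕ} (hk : 2 ≤ k) (hkt : k * t ≤ m)
    (hd1 : m < d + t) (hd2 : d ≤ m) (hd1' : m < d' + t) (hd2' : d' ≤ m)
    (ha1 : 1 ≤ a) (ha2 : a + t ≤ m) (ha1' : 1 ≤ a') (ha2' : a' + t ≤ m)
    {x y : ℕ} (hxy : x ≠ y)
    (hx : x ∈ AP a d k) (hx' : x ∈ AP a' d' k)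
    (hy : y ∈ AP a d k) (hy' : y ∈ AP a' d' k) :
    d = d' ∧ a = a' := by
  obtain ⟨i, hi, hix⟩ := mem_AP.mp hx
  obtain ⟨i', hi', hix'⟩ := mem_AP.mp hx'
  obtain ⟨j, hj, hjy⟩ := mem_AP.mp hy
  obtain ⟨j', hj', hjy'⟩ := mem_AP.mp hy'
  have hiz : (a : ℤ) + i * d = x := by exact_mod_cast hix
  have hiz' : (a' : ℤ) + i' * d' = x := by exact_mod_cast hix'
  have hjz : (a : ℤ) + j * d = y := by exact_mod_cast hjy
  have hjz' : (a' : ℤ) + j' * d' = y := by exact_mod_cast hjy'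
  have hij : i ≠ j := by
    rintro rfl
    exact hxy (hix.symm.trans hjy)
  have hij' : i' ≠ j' := by
    rintro rfl
    exact hxy (hix'.symm.trans hjy')
  have hEd : ((i : ℤ) - j) * d = ((i' : ℤ) - j') * d' := by
    linear_combination hiz - hjz - hiz' + hjz'
  set e : ℕ := ((i : ℤ) - j).natAbs with hedef
  set e' : ℕ := ((i' : ℤ) - j').natAbs with hedef'
  have he1 : 1 ≤ e := by omega
  have he2 : e ≤ k - 1 := by omega
  have he1' : 1 ≤ e' := by omega
  have he2' : e' ≤ k - 1 := by omega
  have heq : e * d = e' * d' := by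
    have h := congrArg Int.natAbs hEd
    simpa [Int.natAbs_mul] using h
  have hdd : d = d' := diff_eq hkt he1 he2 he1' he2' hd1 hd2 hd1' hd2' heq
  subst hdd
  refine ⟨rfl, ?_⟩
  have hII : ((i : ℤ) - i') * d = (a' : ℤ) - a := by linear_combination hiz - hiz'
  have ha2z : (a : ℤ) + t ≤ m := by exact_mod_cast ha2
  have ha2z' : (a' : ℤ) + t ≤ m := by exact_mod_cast ha2'
  have ha1z : (1 : ℤ) ≤ (a : ℤ) := by exact_mod_cast ha1
  have ha1z' : (1 : ℤ) ≤ (a' : ℤ) := by exact_mod_cast ha1'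
  have hd1z : (m : ℤ) < (d : ℤ) + t := by exact_mod_cast hd1
  rcases lt_trichotomy ((i : ℤ) - i') 0 with h | h | h
  · exfalso
    have h1 : (i : ℤ) - i' ≤ -1 := by omega
    have h2 : ((i : ℤ) - i') * d ≤ -1 * d :=
      mul_le_mul_of_nonneg_right h1 (by positivity)
    linarith
  · have : (a' : ℤ) - a = 0 := by rw [← hII, h, zero_mul]
    omega
  · exfalso
    have h1 : (1 : ℤ) ≤ (i : ℤ) - i' := by omega
    have h2 : 1 * (d : ℤ) ≤ ((i : ℤ) - i') * d :=
      mul_le_mul_of_nonneg_right h1 (by positivity)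
    linarith

/-- For all large `k` and all `n ≥ k³` there is an almost disjoint family of
`k`-term arithmetic progressions in `{1,...,n}` of size at least `n²/(4k³)`. -/
theorem exists_large_almost_disjoint_family :
    ∃ K : ℕ, ∀ k : ℕ, K ≤ k → ∀ n : ℕ, k ^ 3 ≤ n →
      ∃ F : Finset (Finset ℕ),
        (∀ P ∈ F, IsKAP n k P) ∧
        (∀ P ∈ F, ∀ Q ∈ F, P ≠ Q → (P ∩ Q).card ≤ 1) ∧
        (n : ℝ) ^ 2 / (4 * (k : ℝ) ^ 3) ≤ (F.card : ℝ) := by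
  refine ⟨100, fun k hk n hn => ?_⟩
  have hk0 : 0 < k := by omega
  have hk2 : 2 ≤ k := by omega
  set m := n / k with hm
  set t := m / k with ht
  have hkm : k * m ≤ n := by rw [hm, mul_comm]; exact Nat.div_mul_le_self n k
  have hnm : n < (m + 1) * k := (Nat.div_lt_iff_lt_mul hk0).1 (by omega)
  have hkt : k * t ≤ m := by rw [ht, mul_comm]; exact Nat.div_mul_le_self m k
  have hmt : m < (t + 1) * k := (Nat.div_lt_iff_lt_mul hk0).1 (by omega)
  have hmk : k * k ≤ m := by
    rw [hm, Nat.le_div_iff_mul_le hk0]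
    calc k * k * k = k ^ 3 := by ring
      _ ≤ n := hn
  have h100t : 100 * t ≤ m := le_trans (Nat.mul_le_mul_right t hk) hkt
  have h100k : 100 * k ≤ m := le_trans (Nat.mul_le_mul_right k hk) hmk
  have htm : t ≤ m := by omega
  have hm0 : 10000 ≤ m := le_trans (Nat.mul_le_mul hk hk) hmk
  set I : Finset (ℕ × ℕ) := Finset.Ioc (m - t) m ×ˢ Finset.Icc 1 (m - t) with hI
  set F : Finset (Finset ℕ) := I.image (fun p => AP p.2 p.1 k) with hF
  have hmemI : ∀ p ∈ I, m < p.1 + t ∧ p.1 ≤ m ∧ 1 ≤ p.2 ∧ p.2 + t ≤ m := by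
    intro p hp
    rw [hI, Finset.mem_product, Finset.mem_Ioc, Finset.mem_Icc] at hp
    omega
  refine ⟨F, ?_, ?_, ?_⟩
  · intro P hP
    rw [hF, Finset.mem_image] at hP
    obtain ⟨p, hpI, rfl⟩ := hP
    obtain ⟨h1, h2, h3, h4⟩ := hmemI p hpI
    refine ⟨p.2, p.1, h3, by omega, ?_, rfl⟩
    have h5 : (k - 1) * p.1 ≤ (k - 1) * m := Nat.mul_le_mul_left _ h2
    have h6 : p.2 + (k - 1) * p.1 ≤ m + (k - 1) * m := add_le_add (by omega) h5
    have h7 : m + (k - 1) * m = ((k - 1) + 1) * m := by ring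
    have h8 : (k - 1) + 1 = k := by omega
    calc p.2 + (k - 1) * p.1 ≤ m + (k - 1) * m := h6
      _ = ((k - 1) + 1) * m := h7
      _ = k * m := by rw [h8]
      _ ≤ n := hkm
  · intro P hP Q hQ hPQ
    by_contra hcard
    push_neg at hcard
    obtain ⟨x, hx, y, hy, hxy⟩ := Finset.one_lt_card.mp hcard
    rw [hF, Finset.mem_image] at hP hQ
    obtain ⟨p, hpI, rfl⟩ := hP
    obtain ⟨q, hqI, rfl⟩ := hQ
    obtain ⟨hp1, hp2, hp3, hp4⟩ := hmemI p hpI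
    obtain ⟨hq1, hq2, hq3, hq4⟩ := hmemI q hqI
    rw [Finset.mem_inter] at hx hy
    have hkey := key_lemma hk2 hkt hp1 hp2 hq1 hq2 hp3 hp4 hq3 hq4 hxy
      hx.1 hx.2 hy.1 hy.2
    exact hPQ (by rw [hkey.1, hkey.2])
  · have hinj : Set.InjOn (fun p : ℕ × ℕ => AP p.2 p.1 k) I := by
      intro p hp q hq hpq
      simp only [Finset.mem_coe] at hp hq
      obtain ⟨hp1, hp2, hp3, hp4⟩ := hmemI p hp
      obtain ⟨hq1, hq2, hq3, hq4⟩ := hmemI q hq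
      have hd0 : 1 ≤ p.1 := by omega
      have hx1 : p.2 ∈ AP p.2 p.1 k := mem_AP.mpr ⟨0, by omega, by ring⟩
      have hy1 : p.2 + p.1 ∈ AP p.2 p.1 k := mem_AP.mpr ⟨1, by omega, by ring⟩
      have hpq' : AP p.2 p.1 k = AP q.2 q.1 k := hpq
      have hx2 : p.2 ∈ AP q.2 q.1 k := hpq' ▸ hx1
      have hy2 : p.2 + p.1 ∈ AP q.2 q.1 k := hpq' ▸ hy1
      have hkey := key_lemma hk2 hkt hp1 hp2 hq1 hq2 hp3 hp4 hq3 hq4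
        (show p.2 ≠ p.2 + p.1 by omega) hx1 hx2 hy1 hy2
      exact Prod.ext hkey.1 hkey.2
    have hcardF : F.card = t * (m - t) := by
      rw [hF, Finset.card_image_of_injOn hinj, hI, Finset.card_product,
        Nat.card_Ioc, Nat.card_Icc,
        show m - (m - t) = t by omega, show m - t + 1 - 1 = m - t by omega]
    rw [hcardF]
    have h2 : (m + 1) ^ 2 ≤ 4 * k * (t * (m - t)) := by
      zify [htm]
      have hktz : ((k : ℤ) * t) ≤ m := by exact_mod_cast hkt
      have hmtz : (m : ℤ) < (t + 1) * k := by exact_mod_cast hmt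
      have h100tz : (100 : ℤ) * t ≤ m := by exact_mod_cast h100t
      have h100kz : (100 : ℤ) * k ≤ m := by exact_mod_cast h100k
      have hm0z : (10000 : ℤ) ≤ m := by exact_mod_cast hm0
      have ht0 : (0 : ℤ) ≤ t := by positivity
      have hk0' : (0 : ℤ) ≤ k := by positivity
      have hmtnn : (0 : ℤ) ≤ (m : ℤ) - t := by linarith
      nlinarith [mul_le_mul_of_nonneg_right (show (m : ℤ) - k + 1 ≤ (k : ℤ) * t by linarith)
          hmtnn,
        mul_le_mul_of_nonneg_right h100kz (show (0:ℤ) ≤ (m:ℤ) by linarith),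
        mul_le_mul_of_nonneg_right h100tz (show (0:ℤ) ≤ (m:ℤ) by linarith),
        mul_nonneg hk0' ht0]
    have hnat : n ^ 2 ≤ 4 * k ^ 3 * (t * (m - t)) := by
      calc n ^ 2 ≤ ((m + 1) * k) ^ 2 := Nat.pow_le_pow_left (by omega) 2
        _ = k ^ 2 * (m + 1) ^ 2 := by ring
        _ ≤ k ^ 2 * (4 * k * (t * (m - t))) := Nat.mul_le_mul_left _ h2
        _ = 4 * k ^ 3 * (t * (m - t)) := by ring
    rw [div_le_iff₀ (by positivity)]
    calc (n : ℝ) ^ 2 ≤ ((4 * k ^ 3 * (t * (m - t)) : ℕ) : ℝ) := by exact_mod_cast hnat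
      _ = ((t * (m - t) : ℕ) : ℝ) * (4 * (k : ℝ) ^ 3) := by push_cast [htm]; ring
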